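/- arXiv:2105.01719 — 2 statements merged into one kernel-verified Lean document; each statement's English description precedes it below -/
import Mathlib

section
/- Let T be a tree in ℕ^{<ℕ} and let G be the graph whose vertices are the nodes of T, with an edge between two nodes exactly when one is an immediate successor of the other (i.e., one extends the other by exactly one entry). Then the one-way infinite linear graph L (vertices w_0, w_1, ..., edges exactly (w_i, w_{i+1})) is isomorphic to a subgraph of G if and only if T has an infinite path. -/
/-!
Along an injective walk in the tree, a step up can never be followed by a step down, since that
would revisit a node; and the walk cannot step down forever, since lengths would become negative.
So from some point on the walk only steps up; the nodes it then visits extend one another and grow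
without bound, hence are prefixed by the initial segments of one infinite path, which lie in `T`
because `T` is closed under prefixes. Conversely, the initial segments of a path form such a walk.
-/

open Function

variable {α : Type*}

def IsImmediateSucc (σ τ : List α) : Prop :=
  ∃ a, τ = σ ++ [a]

namespace IsImmediateSucc

variable {σ σ' τ : List α}

theorem length_eq (h : IsImmediateSucc σ τ) : τ.length = σ.length + 1 := by
  obtain ⟨a, rfl⟩ := h
  simp

theorem left_unique (h : IsImmediateSucc σ τ) (h' : IsImmediateSucc σ' τ) : σ = σ' := by
  obtain ⟨a, rfl⟩ := h
  obtain ⟨a', ha'⟩ := h'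
  exact (List.append_inj' ha' rfl).1

end IsImmediateSucc

theorem isImmediateSucc_ofFn (f : ℕ → α) (n : ℕ) :
    IsImmediateSucc (List.ofFn fun i : Fin n => f i) (List.ofFn fun i : Fin (n + 1) => f i) :=
  ⟨f n, List.ofFn_succ_last⟩

section Chain

variable {ψ : ℕ → List α} (hψ : ∀ k, IsImmediateSucc (ψ k) (ψ (k + 1)))
include hψ

theorem length_chain (n : ℕ) : (ψ n).length = (ψ 0).length + n := by
  induction n with
  | zero => rfl
  | succ n ih => rw [(hψ n).length_eq, ih, Nat.add_assoc]

theorem exists_ofFn_prefix_chain :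
    ∃ f : ℕ → α, ∀ n, (List.ofFn fun i : Fin n => f i) <+: ψ n := by
  have hlt (n : ℕ) : n < (ψ (n + 1)).length := by rw [length_chain hψ]; omega
  refine ⟨fun n => (ψ (n + 1))[n]'(hlt n), fun n => ?_⟩
  suffices h : (List.ofFn fun i : Fin n => (ψ (i + 1))[(i : ℕ)]'(hlt i)) = (ψ n).take n by
    rw [h]
    exact List.take_prefix n (ψ n)
  induction n with
  | zero => simp
  | succ n ih =>
    obtain ⟨a, ha⟩ := hψ n
    have hle : n ≤ (ψ n).length := by rw [length_chain hψ]; omega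
    rw [List.ofFn_succ_last, List.take_succ_eq_append_getElem (hlt n)]
    simp only [Fin.val_castSucc, Fin.val_last, ih]
    congr 1
    rw [ha, List.take_append_of_le_length hle]

end Chain

section Walk

variable {φ : ℕ → List α}
  (hstep : ∀ i, IsImmediateSucc (φ i) (φ (i + 1)) ∨ IsImmediateSucc (φ (i + 1)) (φ i))
include hstep

theorem exists_isImmediateSucc_of_walk : ∃ i, IsImmediateSucc (φ i) (φ (i + 1)) := by
  by_contra! hup
  have hdown (i : ℕ) : IsImmediateSucc (φ (i + 1)) (φ i) := (hstep i).resolve_left (hup i)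
  have hlen (i : ℕ) : (φ 0).length = (φ i).length + i := by
    induction i with
    | zero => rfl
    | succ i ih => rw [ih, (hdown i).length_eq]; omega
  have := hlen ((φ 0).length + 1)
  omega

variable (hφ : Injective φ)
include hφ

theorem IsImmediateSucc.succ_of_injective_walk {i : ℕ} (h : IsImmediateSucc (φ i) (φ (i + 1))) :
    IsImmediateSucc (φ (i + 1)) (φ (i + 2)) :=
  (hstep (i + 1)).resolve_right fun hback => by
    have := hφ (hback.left_unique h)
    omega

theorem IsImmediateSucc.add_of_injective_walk {i : ℕ} (h : IsImmediateSucc (φ i) (φ (i + 1)))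
    (k : ℕ) : IsImmediateSucc (φ (i + k)) (φ (i + k + 1)) := by
  induction k with
  | zero => exact h
  | succ k ih => exact ih.succ_of_injective_walk hstep hφ

end Walk

theorem stmt_8 (T : Set (List ℕ))
    (htree : ∀ σ τ : List ℕ, τ <+: σ → σ ∈ T → τ ∈ T) :
    -- the ray L embeds into the graph on the nodes of T whose edges join
    -- immediate successor pairs, iff T has an infinite path
    (∃ φ : ℕ → List ℕ, Function.Injective φ ∧ (∀ i : ℕ, φ i ∈ T) ∧
      ∀ i : ℕ, (∃ a : ℕ, φ (i + 1) = φ i ++ [a]) ∨ (∃ a : ℕ, φ i = φ (i + 1) ++ [a])) ↔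
    (∃ f : ℕ → ℕ, ∀ n : ℕ, (List.ofFn fun i : Fin n => f i) ∈ T) := by
  constructor
  · rintro ⟨φ, hφ, hmem, hstep⟩
    obtain ⟨i₀, hup⟩ := exists_isImmediateSucc_of_walk hstep
    obtain ⟨f, hf⟩ := exists_ofFn_prefix_chain (hup.add_of_injective_walk hstep hφ)
    exact ⟨f, fun n => htree _ _ (hf n) (hmem _)⟩
  · rintro ⟨f, hf⟩
    refine ⟨fun n => List.ofFn fun i : Fin n => f i, fun m n hmn => ?_, hf,
      fun n => .inl (isImmediateSucc_ofFn f n)⟩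
    simpa using congrArg List.length hmn
end

section
/- Let T_0, T_1, T_2, ... be a sequence of trees in ℕ^{<ℕ}. For each i, let G_i be the graph of T_i (vertices are nodes, edges between immediate successor pairs) with a cycle of length i+3 attached at the root node, and let G be the disjoint union of the G_i. Let L_n denote the one-way infinite linear graph with a cycle of length n+3 appended to its first vertex. Then for every n, L_n is isomorphic to a subgraph of G if and only if T_n has an infinite path. -/
/-!
All of `L_n` is connected, so its image lies in one component `G_i`. Give the vertices of `G_i`
heights: cycle vertex `c` has height `c`, the root `i + 2`, a tree node `σ` height `i + 2 + |σ|`.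
Every vertex other than the root has at most one neighbour that is not higher than itself, so the
highest vertex on the image of the cycle of `L_n` is the root. The rest of that image is then a
non-backtracking `±1` walk between the two cycle neighbours `0` and `i + 1` of the root, hence
monotone: this forces `i = n` and uses up the whole attached cycle. The ray of `L_n` therefore
leaves the root into the tree and, never backtracking, descends along a branch of `T_n`.
-/

/-- Adjacency in the disjoint union `G` of the graphs `G_i`, where `G_i` is the
graph of the tree `T i` (vertices `(i, Sum.inl σ)` for `σ ∈ T i`, edges between
immediate successor pairs) with a cycle of length `i + 3` attached at the root:
the extra cycle vertices are `(i, Sum.inr c)` for `c < i + 2`, arranged in a path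
`0, 1, ..., i + 1` whose two endpoints are joined to the root `(i, Sum.inl [])`. -/
def unionGraphAdj (T : ℕ → Set (List ℕ)) (x y : ℕ × (List ℕ ⊕ ℕ)) : Prop :=
  x.1 = y.1 ∧
    ((∃ σ τ : List ℕ, x.2 = Sum.inl σ ∧ y.2 = Sum.inl τ ∧
        σ ∈ T x.1 ∧ τ ∈ T x.1 ∧ (∃ a : ℕ, τ = σ ++ [a] ∨ σ = τ ++ [a])) ∨
     (∃ c d : ℕ, x.2 = Sum.inr c ∧ y.2 = Sum.inr d ∧
        c < x.1 + 2 ∧ d < x.1 + 2 ∧ (c + 1 = d ∨ d + 1 = c)) ∨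
     (∃ c : ℕ, c < x.1 + 2 ∧ (c = 0 ∨ c = x.1 + 1) ∧
        ((x.2 = Sum.inl ([] : List ℕ) ∧ y.2 = Sum.inr c) ∨
         (y.2 = Sum.inl ([] : List ℕ) ∧ x.2 = Sum.inr c))))

/-- Adjacency in `L_n`: the ray on vertices `Sum.inl i`, with a cycle of length
`n + 3` appended at the first vertex `Sum.inl 0`, the extra cycle vertices being
`Sum.inr c` for `c : Fin (n + 2)`. -/
def lineWithCycleAdj (n : ℕ) (x y : ℕ ⊕ Fin (n + 2)) : Prop :=
  (∃ i : ℕ, (x = Sum.inl i ∧ y = Sum.inl (i + 1)) ∨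
            (x = Sum.inl (i + 1) ∧ y = Sum.inl i)) ∨
  (∃ c d : Fin (n + 2), (c : ℕ) + 1 = (d : ℕ) ∧
    ((x = Sum.inr c ∧ y = Sum.inr d) ∨ (x = Sum.inr d ∧ y = Sum.inr c))) ∨
  (∃ c : Fin (n + 2), ((c : ℕ) = 0 ∨ (c : ℕ) = n + 1) ∧
    ((x = Sum.inl 0 ∧ y = Sum.inr c) ∨ (x = Sum.inr c ∧ y = Sum.inl 0)))

open Function

theorem add_natCast_ne_add_natCast {m : ℕ} (k : ZMod m) {a b : ℕ} (hab : a < b)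
    (hbm : b < a + m) : k + a ≠ k + b := by
  intro h
  have hdvd : m ∣ b - a := by
    rw [← ZMod.natCast_eq_zero_iff, Nat.cast_sub hab.le, add_left_cancel h, sub_self]
  have := Nat.le_of_dvd (by omega) hdvd
  omega

theorem List.ofFn_succ_eq_append {α : Type*} (f : ℕ → α) (m : ℕ) :
    (List.ofFn fun t : Fin (m + 1) => f t) = (List.ofFn fun t : Fin m => f t) ++ [f m] := by
  rw [List.ofFn_succ']
  simp [List.concat_eq_append]

theorem exists_eq_ofFn_of_nonbacktracking {α : Type*} {s : ℕ → List α} (h0 : s 0 = [])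
    (hadj : ∀ j, ∃ a, s (j + 1) = s j ++ [a] ∨ s j = s (j + 1) ++ [a])
    (hnb : ∀ j, s (j + 2) ≠ s j) : ∃ f : ℕ → α, ∀ m, s m = List.ofFn fun t : Fin m => f t := by
  have hdown : ∀ j, ∃ a, s (j + 1) = s j ++ [a] := by
    intro j
    induction j with
    | zero =>
      obtain ⟨a, h | h⟩ := hadj 0
      · exact ⟨a, h⟩
      · simp [h0] at h
    | succ j ih =>
      obtain ⟨a, ha⟩ := ih
      obtain ⟨b, h | h⟩ := hadj (j + 1)
      · exact ⟨b, h⟩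
      · exact absurd (List.append_inj' (ha.symm.trans h) rfl).1.symm (hnb j)
  choose f hf using hdown
  refine ⟨f, fun m => ?_⟩
  induction m with
  | zero => simpa using h0
  | succ m ih => rw [hf, ih, List.ofFn_succ_eq_append]

theorem eq_add_mul_of_nonbacktracking {d : ℕ → ℤ} {N : ℕ}
    (hstep : ∀ t < N, d (t + 1) - d t = 1 ∨ d (t + 1) - d t = -1)
    (hnb : ∀ t, t + 2 ≤ N → d (t + 2) ≠ d t) :
    ∃ ε : ℤ, (ε = 1 ∨ ε = -1) ∧ ∀ t ≤ N, d t = d 0 + ε * t := by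
  rcases Nat.eq_zero_or_pos N with rfl | hN
  · exact ⟨1, Or.inl rfl, fun t ht => by simp [Nat.le_zero.1 ht]⟩
  have hconst : ∀ t < N, d (t + 1) - d t = d 1 - d 0 := by
    intro t
    induction t with
    | zero => simp
    | succ t ih =>
      intro ht
      have : d (t + 1 + 1) ≠ d t := hnb t ht
      rcases hstep t (by omega) with h | h <;> rcases hstep (t + 1) ht with h' | h' <;> omega
  refine ⟨d 1 - d 0, by simpa using hstep 0 hN, fun t ht => ?_⟩
  induction t with
  | zero => simp
  | succ t ih =>
    push_cast
    linarith [ih (by omega), hconst t ht]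

theorem eq_add_one_and_exists_eq_of_nonbacktracking {d : ℕ → ℕ} {N i : ℕ} (hN : 0 < N)
    (hstep : ∀ t < N, d t + 1 = d (t + 1) ∨ d (t + 1) + 1 = d t)
    (hnb : ∀ t, t + 2 ≤ N → d (t + 2) ≠ d t)
    (hfirst : d 0 = 0 ∨ d 0 = i + 1) (hlast : d N = 0 ∨ d N = i + 1) :
    N = i + 1 ∧ ∀ c < i + 2, ∃ t ≤ N, d t = c := by
  obtain ⟨ε, rfl | rfl, hlin⟩ := eq_add_mul_of_nonbacktracking (d := fun t => (d t : ℤ))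
    (fun t ht => by have := hstep t ht; omega) (fun t ht h => hnb t ht (by exact_mod_cast h))
  · have hend := hlin N le_rfl
    refine ⟨by omega, fun c hc => ⟨c, by omega, ?_⟩⟩
    have := hlin c (by omega)
    omega
  · have hend := hlin N le_rfl
    refine ⟨by omega, fun c hc => ⟨i + 1 - c, by omega, ?_⟩⟩
    have := hlin (i + 1 - c) (by omega)
    omega

theorem lineWithCycleAdj.apply_eq_apply_inl_zero {n : ℕ} {β : Type*} {g : ℕ ⊕ Fin (n + 2) → β}
    (hg : ∀ x y, lineWithCycleAdj n x y → g x = g y) (x : ℕ ⊕ Fin (n + 2)) :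
    g x = g (Sum.inl 0) := by
  rcases x with j | ⟨c, hc⟩
  · induction j with
    | zero => rfl
    | succ j ih => exact (hg _ _ (Or.inl ⟨j, Or.inr ⟨rfl, rfl⟩⟩)).trans ih
  · induction c with
    | zero => exact hg _ _ (Or.inr (Or.inr ⟨⟨0, hc⟩, Or.inl rfl, Or.inr ⟨rfl, rfl⟩⟩))
    | succ c ih =>
      exact (hg _ _ (Or.inr (Or.inl ⟨⟨c, by omega⟩, ⟨c + 1, hc⟩, rfl, Or.inr ⟨rfl, rfl⟩⟩))).trans
        (ih (by omega))

-- The cycle of `L_n`, indexed by `ZMod (n + 3)` so that going around it is adding `1`.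
def lineCycle (n : ℕ) (j : ZMod (n + 3)) : ℕ ⊕ Fin (n + 2) :=
  match j.val with
  | 0 => Sum.inl 0
  | c + 1 => Sum.inr (Fin.ofNat (n + 2) c)

namespace lineCycle

variable {n : ℕ}

theorem injective : Injective (lineCycle n) := by
  intro a b h
  apply ZMod.val_injective
  have ha := ZMod.val_lt a
  have hb := ZMod.val_lt b
  unfold lineCycle at h
  rcases hva : a.val with _ | c <;> rcases hvb : b.val with _ | d <;>
    simp only [hva, hvb, reduceCtorEq, Sum.inr.injEq, Fin.ext_iff, Fin.val_ofNat] at h ⊢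
  rw [Nat.mod_eq_of_lt (by omega), Nat.mod_eq_of_lt (by omega)] at h
  rw [h]

theorem adj (j : ZMod (n + 3)) : lineWithCycleAdj n (lineCycle n j) (lineCycle n (j + 1)) := by
  have hj := ZMod.val_lt j
  have hval : (j + 1).val = (j.val + 1) % (n + 3) := by
    rw [ZMod.val_add, ZMod.val_one_eq_one_mod, Nat.mod_eq_of_lt (by omega : 1 < n + 3)]
  unfold lineCycle lineWithCycleAdj
  rw [hval]
  generalize j.val = a at hj
  rcases a with _ | c
  · exact Or.inr (Or.inr ⟨0, Or.inl rfl, Or.inl ⟨rfl, by simp⟩⟩)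
  by_cases hlast : c = n + 1
  · subst hlast
    rw [Nat.mod_self]
    exact Or.inr (Or.inr ⟨Fin.last _, Or.inr rfl, Or.inr ⟨by simp, rfl⟩⟩)
  · rw [Nat.mod_eq_of_lt (by omega)]
    refine Or.inr (Or.inl ⟨Fin.ofNat _ c, Fin.ofNat _ (c + 1), ?_, Or.inl ⟨rfl, rfl⟩⟩)
    simp only [Fin.val_ofNat]
    rw [Nat.mod_eq_of_lt (by omega), Nat.mod_eq_of_lt (by omega)]

theorem ne_inl_succ (j : ZMod (n + 3)) (t : ℕ) : lineCycle n j ≠ Sum.inl (t + 1) := by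
  unfold lineCycle
  split <;> simp

@[simp]
theorem zero : lineCycle n 0 = .inl 0 := by
  simp [lineCycle]

theorem add_natCast_ne (k : ZMod (n + 3)) {a b : ℕ} (hab : a < b)
    (hbm : b < a + (n + 3)) : lineCycle n (k + a) ≠ lineCycle n (k + b) :=
  injective.ne (add_natCast_ne_add_natCast k hab hbm)

theorem adj_natCast (k : ZMod (n + 3)) (t : ℕ) :
    lineWithCycleAdj n (lineCycle n (k + t)) (lineCycle n (k + ((t + 1 : ℕ) : ZMod (n + 3)))) := by
  simpa [add_assoc] using adj (k + (t : ZMod (n + 3)))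

end lineCycle

def componentAdj (T : ℕ → Set (List ℕ)) (i : ℕ) (p q : List ℕ ⊕ ℕ) : Prop :=
  unionGraphAdj T (i, p) (i, q)

def vertexHeight (i : ℕ) : List ℕ ⊕ ℕ → ℕ :=
  Sum.elim (fun σ => i + 2 + σ.length) id

namespace componentAdj

variable {T : ℕ → Set (List ℕ)} {i : ℕ}

theorem symm {p q : List ℕ ⊕ ℕ} (h : componentAdj T i p q) : componentAdj T i q p := by
  obtain ⟨-, h⟩ := h
  refine ⟨rfl, ?_⟩
  rcases h with ⟨σ, τ, hp, hq, hσ, hτ, a, h⟩ | ⟨c, d, hp, hq, hc, hd, h⟩ | ⟨c, hc, hc', h⟩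
  · exact Or.inl ⟨τ, σ, hq, hp, hτ, hσ, a, h.symm⟩
  · exact Or.inr (Or.inl ⟨d, c, hq, hp, hd, hc, h.symm⟩)
  · exact Or.inr (Or.inr ⟨c, hc, hc', h.symm⟩)

@[simp]
theorem inl_inl {σ τ : List ℕ} :
    componentAdj T i (.inl σ) (.inl τ) ↔
      σ ∈ T i ∧ τ ∈ T i ∧ ∃ a, τ = σ ++ [a] ∨ σ = τ ++ [a] := by
  simp [componentAdj, unionGraphAdj]

@[simp]
theorem inr_inr {c d : ℕ} :
    componentAdj T i (.inr c) (.inr d) ↔ c < i + 2 ∧ d < i + 2 ∧ (c + 1 = d ∨ d + 1 = c) := by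
  simp [componentAdj, unionGraphAdj]

@[simp]
theorem inl_inr {σ : List ℕ} {c : ℕ} :
    componentAdj T i (.inl σ) (.inr c) ↔ σ = [] ∧ (c = 0 ∨ c = i + 1) := by
  grind [componentAdj, unionGraphAdj]

@[simp]
theorem inr_inl {σ : List ℕ} {c : ℕ} :
    componentAdj T i (.inr c) (.inl σ) ↔ σ = [] ∧ (c = 0 ∨ c = i + 1) := by
  grind [componentAdj, unionGraphAdj]

theorem eq_of_height_le {p q q' : List ℕ ⊕ ℕ} (hp : p ≠ .inl []) (hq : componentAdj T i p q)
    (hq' : componentAdj T i p q') (hle : vertexHeight i q ≤ vertexHeight i p)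
    (hle' : vertexHeight i q' ≤ vertexHeight i p) : q = q' := by
  suffices ∃ r, ∀ q, componentAdj T i p q → vertexHeight i q ≤ vertexHeight i p → q = r by
    obtain ⟨r, hr⟩ := this
    rw [hr q hq hle, hr q' hq' hle']
  rcases p with σ | c
  · refine ⟨.inl σ.dropLast, ?_⟩
    rintro (τ | d) h hle
    · change i + 2 + τ.length ≤ i + 2 + σ.length at hle
      obtain ⟨-, -, a, rfl | rfl⟩ := inl_inl.1 h
      · simp at hle
      · simp
    · exact absurd (by rw [(inl_inr.1 h).1]) hp
  · refine ⟨.inr (c - 1), ?_⟩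
    rintro (τ | d) h hle
    · change i + 2 + τ.length ≤ c at hle
      have := (inr_inl.1 h).2
      omega
    · change d ≤ c at hle
      have := (inr_inr.1 h).2.2
      exact congrArg Sum.inr (by omega)

theorem eq_inr_of_adj_root {q : List ℕ ⊕ ℕ} (h : componentAdj T i (.inl []) q)
    (hle : vertexHeight i q ≤ i + 2) : q = .inr 0 ∨ q = .inr (i + 1) := by
  rcases q with τ | d
  · change i + 2 + τ.length ≤ i + 2 at hle
    obtain ⟨-, -, a, rfl | h⟩ := inl_inl.1 h
    · simp at hle
    · simp at h
  · simpa using (inl_inr.1 h).2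

theorem eq_inr_of_adj_inr {c : ℕ} {q : List ℕ ⊕ ℕ} (h : componentAdj T i (.inr c) q)
    (hq : q ≠ .inl []) : ∃ d, q = .inr d ∧ (c + 1 = d ∨ d + 1 = c) := by
  rcases q with τ | d
  · exact absurd (by rw [(inr_inl.1 h).1]) hq
  · exact ⟨d, rfl, (inr_inr.1 h).2.2⟩

theorem lt_of_inr {c : ℕ} {q : List ℕ ⊕ ℕ} (h : componentAdj T i q (.inr c)) : c < i + 2 := by
  rcases q with τ | d
  · have := (inl_inr.1 h).2
    omega
  · exact (inr_inr.1 h).2.1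

theorem exists_eq_inr_of_walk {w : ℕ → List ℕ ⊕ ℕ} {N c : ℕ} (h0 : w 0 = .inr c)
    (hadj : ∀ t < N, componentAdj T i (w t) (w (t + 1))) (hroot : ∀ t ≤ N, w t ≠ .inl []) :
    ∀ t ≤ N, ∃ c, w t = .inr c := by
  intro t
  induction t with
  | zero => exact fun _ => ⟨c, h0⟩
  | succ t ih =>
    intro ht
    obtain ⟨c, hc⟩ := ih (by omega)
    obtain ⟨d, hd, -⟩ := eq_inr_of_adj_inr (hc ▸ hadj t (by omega)) (hroot _ ht)
    exact ⟨d, hd⟩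

end componentAdj

section Embedding

variable {T : ℕ → Set (List ℕ)} {n i : ℕ} {ψ : ℕ ⊕ Fin (n + 2) → List ℕ ⊕ ℕ}

theorem exists_lineCycle_eq_root (hψ : Injective ψ)
    (hadj : ∀ x y, lineWithCycleAdj n x y → componentAdj T i (ψ x) (ψ y)) :
    ∃ k, ψ (lineCycle n k) = .inl [] ∧ ∀ j, vertexHeight i (ψ (lineCycle n j)) ≤ i + 2 := by
  obtain ⟨k, hk⟩ := Finite.exists_max fun j => vertexHeight i (ψ (lineCycle n j))
  have hnext : componentAdj T i (ψ (lineCycle n k)) (ψ (lineCycle n (k + (1 : ℕ)))) := by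
    simpa using hadj _ _ (lineCycle.adj_natCast k 0)
  have hprev : componentAdj T i (ψ (lineCycle n k)) (ψ (lineCycle n (k + (n + 2 : ℕ)))) := by
    have := (hadj _ _ (lineCycle.adj_natCast k (n + 2))).symm
    rwa [ZMod.natCast_self, add_zero] at this
  -- The highest vertex of the cycle has two distinct neighbours on it, neither of them higher.
  have hroot : ψ (lineCycle n k) = .inl [] := by
    by_contra hne
    exact hψ.ne (lineCycle.add_natCast_ne k (by omega : 1 < n + 2) (by omega))
      (componentAdj.eq_of_height_le hne hnext hprev (hk _) (hk _))
  exact ⟨k, hroot, fun j => by simpa [hroot, vertexHeight] using hk j⟩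

theorem eq_and_exists_lineCycle_eq_inr (hψ : Injective ψ)
    (hadj : ∀ x y, lineWithCycleAdj n x y → componentAdj T i (ψ x) (ψ y)) :
    i = n ∧ ∀ c < i + 2, ∃ j, ψ (lineCycle n j) = .inr c := by
  obtain ⟨k, hk, hle⟩ := exists_lineCycle_eq_root hψ hadj
  -- `w` goes once around the image of the cycle from the root back to it; in between, `w 1`,
  -- ..., `w (n + 2)` is a walk along the attached cycle.
  set w : ℕ → List ℕ ⊕ ℕ := fun t => ψ (lineCycle n (k + t))
  have hw0 : w 0 = .inl [] := by simpa [w] using hk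
  have hwper : w (n + 3) = .inl [] := by simp only [w]; rw [ZMod.natCast_self, add_zero, hk]
  have hwadj : ∀ t, componentAdj T i (w t) (w (t + 1)) :=
    fun t => hadj _ _ (lineCycle.adj_natCast k t)
  have hwne : ∀ a b, a < b → b < a + (n + 3) → w a ≠ w b :=
    fun a b hab hb => hψ.ne (lineCycle.add_natCast_ne k hab hb)
  obtain ⟨c₁, hc₁⟩ : ∃ c, w 1 = .inr c := by
    rcases componentAdj.eq_inr_of_adj_root (hw0 ▸ hwadj 0) (hle _) with h | h <;> exact ⟨_, h⟩
  have hinr := componentAdj.exists_eq_inr_of_walk (w := fun t => w (t + 1)) (N := n + 1) hc₁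
    (fun t _ => hwadj (t + 1)) (fun t ht => hw0 ▸ (hwne 0 (t + 1) (by omega) (by omega)).symm)
  choose! d hd using hinr
  have hstep : ∀ t < n + 1, d t + 1 = d (t + 1) ∨ d (t + 1) + 1 = d t := by
    intro t ht
    have := hwadj (t + 1)
    rw [hd t (by omega), hd (t + 1) ht] at this
    exact (componentAdj.inr_inr.1 this).2.2
  have hnb : ∀ t, t + 2 ≤ n + 1 → d (t + 2) ≠ d t := by
    intro t ht h
    have h3 : w (t + 3) = .inr (d (t + 2)) := hd (t + 2) ht
    exact hwne (t + 1) (t + 3) (by omega) (by omega) (by rw [hd t (by omega), h3, h])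
  have hfirst : d 0 = 0 ∨ d 0 = i + 1 := by
    have h1 : w 1 = .inr (d 0) := hd 0 (by omega)
    have : w 1 = .inr 0 ∨ w 1 = .inr (i + 1) :=
      componentAdj.eq_inr_of_adj_root (hw0 ▸ hwadj 0) (hle _)
    rwa [h1, Sum.inr.injEq, Sum.inr.injEq] at this
  have hlast : d (n + 1) = 0 ∨ d (n + 1) = i + 1 := by
    have h1 : w (n + 2) = .inr (d (n + 1)) := hd (n + 1) le_rfl
    have : w (n + 2) = .inr 0 ∨ w (n + 2) = .inr (i + 1) :=
      componentAdj.eq_inr_of_adj_root (hwper ▸ (hwadj (n + 2)).symm) (hle _)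
    rwa [h1, Sum.inr.injEq, Sum.inr.injEq] at this
  obtain ⟨hin, hcover⟩ :=
    eq_add_one_and_exists_eq_of_nonbacktracking (by omega) hstep hnb hfirst hlast
  refine ⟨by omega, fun c hc => ?_⟩
  obtain ⟨t, ht, rfl⟩ := hcover c hc
  exact ⟨k + (t + 1 : ℕ), hd t ht⟩

theorem exists_branch_of_embedding (hψ : Injective ψ)
    (hadj : ∀ x y, lineWithCycleAdj n x y → componentAdj T i (ψ x) (ψ y)) :
    ∃ f : ℕ → ℕ, ∀ m, (List.ofFn fun t : Fin m => f t) ∈ T i := by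
  obtain ⟨k, hk, hle⟩ := exists_lineCycle_eq_root hψ hadj
  obtain ⟨-, hcycle⟩ := eq_and_exists_lineCycle_eq_inr hψ hadj
  have hray : ∀ j, componentAdj T i (ψ (.inl j)) (ψ (.inl (j + 1))) :=
    fun j => hadj _ _ (Or.inl ⟨j, Or.inl ⟨rfl, rfl⟩⟩)
  -- The cycle of `L_n` already covers the attached cycle, so the ray has to enter the tree.
  have hoff : ∀ j, ∃ σ, σ ≠ [] ∧ ψ (.inl (j + 1)) = .inl σ := by
    intro j
    have hne : ∀ x, ψ (lineCycle n x) ≠ ψ (.inl (j + 1)) :=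
      fun x => hψ.ne (lineCycle.ne_inl_succ x j)
    rcases h : ψ (.inl (j + 1)) with σ | c
    · exact ⟨σ, fun hσ => hne k (by rw [hk, h, hσ]), rfl⟩
    · obtain ⟨x, hx⟩ := hcycle c (componentAdj.lt_of_inr (h ▸ hray j))
      exact absurd (hx.trans h.symm) (hne x)
  have hstart : ψ (.inl 0) = .inl [] := by
    obtain ⟨σ, hσ, h1⟩ := hoff 0
    have h0 : vertexHeight i (ψ (.inl 0)) ≤ i + 2 := by simpa using hle 0
    have hadj0 := h1 ▸ hray 0
    rcases h : ψ (.inl 0) with τ | c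
    · rw [h] at h0
      simpa [vertexHeight] using h0
    · rw [h] at hadj0
      exact absurd (componentAdj.inr_inl.1 hadj0).1 hσ
  have hinl : ∀ j, ∃ σ, ψ (.inl j) = .inl σ := by
    rintro (_ | j)
    · exact ⟨[], hstart⟩
    · obtain ⟨σ, -, h⟩ := hoff j
      exact ⟨σ, h⟩
  choose s hs using hinl
  have hsadj (j : ℕ) : componentAdj T i (.inl (s j)) (.inl (s (j + 1))) := by
    simpa only [hs] using hray j
  obtain ⟨f, hf⟩ := exists_eq_ofFn_of_nonbacktracking (s := s)
    (by simpa [hstart] using (hs 0).symm) (fun j => (componentAdj.inl_inl.1 (hsadj j)).2.2)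
    (fun j h => hψ.ne (Sum.inl_injective.ne (by omega : j + 2 ≠ j)) (by rw [hs, hs, h]))
  exact ⟨f, fun m => hf m ▸ (componentAdj.inl_inl.1 (hsadj m)).1⟩

end Embedding

theorem exists_componentAdj_embedding {T : ℕ → Set (List ℕ)} {n : ℕ}
    {φ : ℕ ⊕ Fin (n + 2) → ℕ × (List ℕ ⊕ ℕ)} (hφ : Injective φ)
    (hadj : ∀ x y, lineWithCycleAdj n x y → unionGraphAdj T (φ x) (φ y)) :
    ∃ i, ∃ ψ : ℕ ⊕ Fin (n + 2) → List ℕ ⊕ ℕ, Injective ψ ∧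
      ∀ x y, lineWithCycleAdj n x y → componentAdj T i (ψ x) (ψ y) := by
  have hφ_eq (x : ℕ ⊕ Fin (n + 2)) : φ x = ((φ (.inl 0)).1, (φ x).2) :=
    Prod.ext (lineWithCycleAdj.apply_eq_apply_inl_zero (fun x y h => (hadj x y h).1) x) rfl
  refine ⟨(φ (.inl 0)).1, fun x => (φ x).2,
    fun x y h => hφ (by rw [hφ_eq x, hφ_eq y]; exact congrArg _ h), fun x y h => ?_⟩
  have := hadj x y h
  rwa [hφ_eq x, hφ_eq y] at this

theorem exists_embedding_of_branch {T : ℕ → Set (List ℕ)} {n : ℕ} (f : ℕ → ℕ)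
    (hf : ∀ m, (List.ofFn fun t : Fin m => f t) ∈ T n) :
    ∃ φ : ℕ ⊕ Fin (n + 2) → ℕ × (List ℕ ⊕ ℕ), Injective φ ∧
      ∀ x y, lineWithCycleAdj n x y → unionGraphAdj T (φ x) (φ y) := by
  refine ⟨fun v => (n, Sum.elim (fun j => .inl (List.ofFn fun t : Fin j => f t))
    (fun c => .inr c.val) v), fun x y h => ?_, fun x y h => ?_⟩
  · refine Injective.sumElim (fun a b hab => ?_) (Sum.inr_injective.comp Fin.val_injective)
      (fun _ _ => Sum.inl_ne_inr) (Prod.mk.inj h).2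
    simpa using congrArg List.length (Sum.inl_injective hab)
  · change componentAdj T n _ _
    rcases h with ⟨j, ⟨rfl, rfl⟩ | ⟨rfl, rfl⟩⟩ | ⟨c, d, hcd, ⟨rfl, rfl⟩ | ⟨rfl, rfl⟩⟩ |
      ⟨c, hc, ⟨rfl, rfl⟩ | ⟨rfl, rfl⟩⟩
    · exact componentAdj.inl_inl.2 ⟨hf _, hf _, f j, .inl (List.ofFn_succ_eq_append f j)⟩
    · exact componentAdj.inl_inl.2 ⟨hf _, hf _, f j, .inr (List.ofFn_succ_eq_append f j)⟩
    · exact componentAdj.inr_inr.2 ⟨c.2, d.2, .inl hcd⟩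
    · exact componentAdj.inr_inr.2 ⟨d.2, c.2, .inr hcd⟩
    · exact componentAdj.inl_inr.2 ⟨List.ofFn_zero, hc⟩
    · exact componentAdj.inr_inl.2 ⟨List.ofFn_zero, hc⟩

theorem stmt_12_general (T : ℕ → Set (List ℕ)) :
    ∀ n : ℕ,
      (∃ φ : (ℕ ⊕ Fin (n + 2)) → ℕ × (List ℕ ⊕ ℕ), Function.Injective φ ∧
        ∀ x y : ℕ ⊕ Fin (n + 2), lineWithCycleAdj n x y →
          unionGraphAdj T (φ x) (φ y)) ↔
      (∃ f : ℕ → ℕ, ∀ m : ℕ, (List.ofFn fun i : Fin m => f i) ∈ T n) := by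
  intro n
  constructor
  · rintro ⟨φ, hφ, hadj⟩
    obtain ⟨i, ψ, hψ, hψadj⟩ := exists_componentAdj_embedding hφ hadj
    obtain ⟨rfl, -⟩ := eq_and_exists_lineCycle_eq_inr hψ hψadj
    exact exists_branch_of_embedding hψ hψadj
  · rintro ⟨f, hf⟩
    exact exists_embedding_of_branch f hf

theorem stmt_12 (T : ℕ → Set (List ℕ))
    (hroot : ∀ i : ℕ, ([] : List ℕ) ∈ T i)
    (htree : ∀ i : ℕ, ∀ σ τ : List ℕ, τ <+: σ → σ ∈ T i → τ ∈ T i) :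
    ∀ n : ℕ,
      (∃ φ : (ℕ ⊕ Fin (n + 2)) → ℕ × (List ℕ ⊕ ℕ), Function.Injective φ ∧
        ∀ x y : ℕ ⊕ Fin (n + 2), lineWithCycleAdj n x y →
          unionGraphAdj T (φ x) (φ y)) ↔
      (∃ f : ℕ → ℕ, ∀ m : ℕ, (List.ofFn fun i : Fin m => f i) ∈ T n) :=
  stmt_12_general T
end
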